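/- Let f : ℝ^{m×n} → ℝ be differentiable, let r̲ ∈ {1,…,r} with r < min{m,n}, and let X have rank r̲. Define s_f(X) as the Frobenius norm of any projection of −∇f(X) onto the tangent cone to ℝ_{≤r}^{m×n} at X. Then ‖∇f(X)‖ ≥ s_f(X) ≥ sqrt((r − r̲)/(min{m,n} − r̲)) · ‖∇f(X)‖. -/

import Mathlib

open Matrix Filter

attribute [local instance] Matrix.frobeniusNormedAddCommGroup Matrix.frobeniusNormedSpace

/-- The set of projections (nearest points in Frobenius norm) of `X` onto `S`. -/
def projSet {m n : ℕ} (S : Set (Matrix (Fin m) (Fin n) ℝ)) (X : Matrix (Fin m) (Fin n) ℝ) :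
    Set (Matrix (Fin m) (Fin n) ℝ) :=
  {Y | Y ∈ S ∧ dist X Y = Metric.infDist X S}

/-- `svalNat A j` is the `(j+1)`-st largest singular value of `A` (0-based indexing):
the square root of the `(j+1)`-st largest eigenvalue of `Aᴴ * A`. -/
noncomputable def svalNat {m n : ℕ} (A : Matrix (Fin m) (Fin n) ℝ) (j : ℕ) : ℝ :=
  if h : j < n then
    Real.sqrt (((show (Aᵀ * A).IsHermitian by
        rw [← Matrix.conjTranspose_eq_transpose_of_trivial]
        exact Matrix.isHermitian_conjTranspose_mul_self A).eigenvalues ∘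
      Tuple.sort (show (Aᵀ * A).IsHermitian by
        rw [← Matrix.conjTranspose_eq_transpose_of_trivial]
        exact Matrix.isHermitian_conjTranspose_mul_self A).eigenvalues) (Fin.rev ⟨j, h⟩))
  else 0

/-- The `Δ`-rank: the number of singular values strictly larger than `Δ`. -/
noncomputable def deltaRank {m n : ℕ} (Δ : ℝ) (A : Matrix (Fin m) (Fin n) ℝ) : ℕ :=
  Set.ncard {j : ℕ | j < min m n ∧ Δ < svalNat A j}

/-- The Bouligand tangent cone to `S` at `X`. -/
def tanCone {m n : ℕ} (S : Set (Matrix (Fin m) (Fin n) ℝ)) (X : Matrix (Fin m) (Fin n) ℝ) :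
    Set (Matrix (Fin m) (Fin n) ℝ) :=
  {V | ∃ t : ℕ → ℝ, ∃ W : ℕ → Matrix (Fin m) (Fin n) ℝ,
    (∀ i, 0 < t i) ∧ Filter.Tendsto t Filter.atTop (nhds 0) ∧
    Filter.Tendsto W Filter.atTop (nhds V) ∧ ∀ i, X + t i • W i ∈ S}

/-- The gradient of `f` at `X`, as a matrix, for the Frobenius inner product. -/
noncomputable def gradMatrix {m n : ℕ} (f : Matrix (Fin m) (Fin n) ℝ → ℝ)
    (X : Matrix (Fin m) (Fin n) ℝ) : Matrix (Fin m) (Fin n) ℝ :=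
  fun i j => fderiv ℝ f X (Matrix.single i j 1)

/-- The Frobenius inner product. -/
def frobInner {m n : ℕ} (A B : Matrix (Fin m) (Fin n) ℝ) : ℝ := ∑ i, ∑ j, A i j * B i j

namespace Stmt14Aux

open Finset

noncomputable def fq {m n : ℕ} (A : Matrix (Fin m) (Fin n) ℝ) : ℝ := ∑ i, ∑ j, (A i j)^2

variable {m n : ℕ}

lemma fq_nonneg (A : Matrix (Fin m) (Fin n) ℝ) : 0 ≤ fq A := by
  apply Finset.sum_nonneg; intro i _; apply Finset.sum_nonneg; intro j _; positivity

lemma fq_eq_trace (A : Matrix (Fin m) (Fin n) ℝ) : fq A = Matrix.trace (Aᴴ * A) := by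
  simp [fq, Matrix.trace, Matrix.mul_apply, Matrix.conjTranspose_apply, Matrix.diag, pow_two]
  rw [Finset.sum_comm]

lemma frobInner_eq_trace (A B : Matrix (Fin m) (Fin n) ℝ) :
    frobInner A B = Matrix.trace (Aᴴ * B) := by
  simp [frobInner, Matrix.trace, Matrix.mul_apply, Matrix.conjTranspose_apply, Matrix.diag]
  rw [Finset.sum_comm]

lemma norm_eq_sqrt_fq (A : Matrix (Fin m) (Fin n) ℝ) : ‖A‖ = Real.sqrt (fq A) := by
  rw [Matrix.frobenius_norm_def, fq]
  rw [Real.sqrt_eq_rpow]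
  congr 1
  apply Finset.sum_congr rfl; intro i _
  apply Finset.sum_congr rfl; intro j _
  rw [Real.norm_eq_abs, show (2:ℝ) = ((2:ℕ):ℝ) by norm_num, Real.rpow_natCast, sq_abs]

lemma sq_norm_eq_fq (A : Matrix (Fin m) (Fin n) ℝ) : ‖A‖^2 = fq A := by
  rw [norm_eq_sqrt_fq, Real.sq_sqrt (fq_nonneg A)]

lemma fq_sub_expand (A B : Matrix (Fin m) (Fin n) ℝ) :
    fq (A - B) = fq A - 2 * frobInner A B + fq B := by
  simp only [fq, frobInner, Matrix.sub_apply, Finset.mul_sum, ← Finset.sum_add_distrib,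
    ← Finset.sum_sub_distrib]
  apply Finset.sum_congr rfl; intro i _
  apply Finset.sum_congr rfl; intro j _
  ring

lemma fq_eq_zero {A : Matrix (Fin m) (Fin n) ℝ} (h : fq A = 0) : A = 0 := by
  ext i j
  have h1 : ∀ i ∈ Finset.univ, (0:ℝ) ≤ ∑ j, (A i j)^2 := fun i _ =>
    Finset.sum_nonneg fun j _ => sq_nonneg _
  have h2 := (Finset.sum_eq_zero_iff_of_nonneg h1).1 h i (Finset.mem_univ i)
  have h3 := (Finset.sum_eq_zero_iff_of_nonneg (fun j _ => sq_nonneg (A i j))).1 h2 j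
    (Finset.mem_univ j)
  exact pow_eq_zero_iff (by norm_num) |>.1 h3

lemma frobInner_smul_left (A B : Matrix (Fin m) (Fin n) ℝ) (t : ℝ) :
    frobInner (t • A) B = t * frobInner A B := by
  simp [frobInner, Finset.mul_sum, Matrix.smul_apply]
  apply Finset.sum_congr rfl; intro i _
  apply Finset.sum_congr rfl; intro j _
  ring

lemma frobInner_smul (A B : Matrix (Fin m) (Fin n) ℝ) (t : ℝ) :
    frobInner A (t • B) = t * frobInner A B := by
  simp [frobInner, Finset.mul_sum, Matrix.smul_apply]
  apply Finset.sum_congr rfl; intro i _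
  apply Finset.sum_congr rfl; intro j _
  ring

lemma fq_smul (A : Matrix (Fin m) (Fin n) ℝ) (t : ℝ) : fq (t • A) = t^2 * fq A := by
  simp [fq, Finset.mul_sum, Matrix.smul_apply, mul_pow]

lemma frobInner_le (A B : Matrix (Fin m) (Fin n) ℝ) :
    frobInner A B ≤ Real.sqrt (fq A) * Real.sqrt (fq B) := by
  by_cases hB : fq B = 0
  · rw [fq_eq_zero hB]
    simp only [Matrix.zero_apply, mul_zero, Finset.sum_const_zero, frobInner]
    positivity
  · have hBpos : 0 < fq B := lt_of_le_of_ne (fq_nonneg B) (Ne.symm hB)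
    set c := frobInner A B with hc
    have key : 0 ≤ fq ((fq B) • A - c • B) := fq_nonneg _
    rw [fq_sub_expand, frobInner_smul_left, frobInner_smul, fq_smul, fq_smul, ← hc] at key
    have h2 : c^2 ≤ fq A * fq B := by nlinarith [key, hBpos]
    calc c ≤ |c| := le_abs_self c
    _ = Real.sqrt (c^2) := (Real.sqrt_sq_eq_abs c).symm
    _ ≤ Real.sqrt (fq A * fq B) := Real.sqrt_le_sqrt h2
    _ = Real.sqrt (fq A) * Real.sqrt (fq B) := Real.sqrt_mul (fq_nonneg A) _

lemma fq_transpose (A : Matrix (Fin m) (Fin n) ℝ) : fq Aᵀ = fq A := by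
  rw [fq, fq, Finset.sum_comm]
  rfl


section Cone

variable {S : Set (Matrix (Fin m) (Fin n) ℝ)} {X V : Matrix (Fin m) (Fin n) ℝ}

lemma mem_tanCone_of_forall (h : ∀ t : ℝ, 0 < t → X + t • V ∈ S) : V ∈ tanCone S X := by
  refine ⟨fun i => 1/(i+1), fun _ => V, fun i => by positivity,
    tendsto_one_div_add_atTop_nhds_zero_nat, tendsto_const_nhds, fun i => h _ (by positivity)⟩

lemma smul_mem_tanCone {t : ℝ} (ht : 0 < t) (hV : V ∈ tanCone S X) : t • V ∈ tanCone S X := by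
  obtain ⟨s, W, hs, hs0, hW, hmem⟩ := hV
  refine ⟨fun i => s i / t, fun i => t • W i, fun i => div_pos (hs i) ht,
    by simpa using hs0.div_const t, hW.const_smul t, fun i => ?_⟩
  have h9 : (s i / t) • (t • W i) = s i • W i := by
    rw [smul_smul, div_mul_cancel₀ _ (ne_of_gt ht)]
  rw [h9]
  exact hmem i

end Cone

lemma rank_add_le' (A B : Matrix (Fin m) (Fin n) ℝ) : (A + B).rank ≤ A.rank + B.rank := by
  rw [Matrix.rank, Matrix.rank, Matrix.rank, Matrix.mulVecLin_add]
  have h : LinearMap.range (A.mulVecLin + B.mulVecLin) ≤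
      LinearMap.range A.mulVecLin ⊔ LinearMap.range B.mulVecLin := by
    rintro x ⟨v, rfl⟩
    exact Submodule.mem_sup.2 ⟨_, ⟨v, rfl⟩, _, ⟨v, rfl⟩, rfl⟩
  exact (Submodule.finrank_mono h).trans
    (Submodule.finrank_add_le_finrank_add_finrank _ _)

lemma exists_top {α : Type*} [DecidableEq α] (s : Finset α) (f : α → ℝ) :
    ∀ k, k ≤ s.card → ∃ T, T ⊆ s ∧ T.card = k ∧ ∀ i ∈ T, ∀ j ∈ s \ T, f j ≤ f i := by
  intro k
  induction k with
  | zero => intro _; exact ⟨∅, Finset.empty_subset s, Finset.card_empty, by simp⟩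
  | succ k ih =>
    intro hk
    obtain ⟨T, hTs, hTc, hTtop⟩ := ih (Nat.le_of_succ_le hk)
    have hne : (s \ T).Nonempty := by
      rw [← Finset.card_pos, Finset.card_sdiff_of_subset hTs, hTc]
      omega
    obtain ⟨i₀, hi₀, hmax⟩ := Finset.exists_max_image (s \ T) f hne
    have hi₀s : i₀ ∈ s := (Finset.mem_sdiff.1 hi₀).1
    have hi₀T : i₀ ∉ T := (Finset.mem_sdiff.1 hi₀).2
    refine ⟨insert i₀ T, Finset.insert_subset hi₀s hTs,
      by rw [Finset.card_insert_of_notMem hi₀T, hTc], ?_⟩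
    intro i hi j hj
    have hj' : j ∈ s \ T := by
      rw [Finset.mem_sdiff] at hj ⊢
      exact ⟨hj.1, fun hjT => hj.2 (Finset.mem_insert_of_mem hjT)⟩
    rcases Finset.mem_insert.1 hi with rfl | hiT
    · exact hmax j hj'
    · exact hTtop i hiT j hj'

lemma tail_bound {q : ℕ} (μ : Fin q → ℝ) (hμ : ∀ i, 0 ≤ μ i) (N k : ℕ)
    (hZ : (Finset.univ.filter fun i => μ i ≠ 0).card ≤ N) (hk : k ≤ N) :
    ∃ T : Finset (Fin q), T.card ≤ k ∧
      (N:ℝ) * (∑ i ∈ Finset.univ \ T, μ i) ≤ ((N:ℝ) - k) * ∑ i, μ i := by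
  classical
  set Z := Finset.univ.filter fun i => μ i ≠ 0 with hZdef
  have hzero : ∀ i, i ∉ Z → μ i = 0 := by
    intro i hi
    by_contra h
    exact hi (Finset.mem_filter.2 ⟨Finset.mem_univ i, h⟩)
  have hsumnn : (0:ℝ) ≤ ∑ i, μ i := Finset.sum_nonneg fun i _ => hμ i
  have hNk : (0:ℝ) ≤ (N:ℝ) - k := sub_nonneg.2 (by exact_mod_cast hk)
  by_cases hcase : Z.card ≤ k
  · refine ⟨Z, hcase, ?_⟩
    have h1 : ∑ i ∈ Finset.univ \ Z, μ i = 0 :=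
      Finset.sum_eq_zero fun i hi => hzero i (Finset.mem_sdiff.1 hi).2
    rw [h1, mul_zero]
    exact mul_nonneg hNk hsumnn
  · push_neg at hcase
    obtain ⟨T, hTZ, hTc, hTtop⟩ := exists_top Z μ k (le_of_lt hcase)
    refine ⟨T, le_of_eq hTc, ?_⟩
    have hsub : Z \ T ⊆ Finset.univ \ T :=
      Finset.sdiff_subset_sdiff (Finset.subset_univ Z) (le_refl T)
    have hS2 : ∑ i ∈ Finset.univ \ T, μ i = ∑ i ∈ Z \ T, μ i := by
      symm
      apply Finset.sum_subset hsub
      intro i hi hiZT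
      apply hzero
      intro hiZ
      exact hiZT (Finset.mem_sdiff.2 ⟨hiZ, (Finset.mem_sdiff.1 hi).2⟩)
    set S1 := ∑ i ∈ T, μ i with hS1def
    set S2 := ∑ i ∈ Z \ T, μ i with hS2def
    have hS1nn : 0 ≤ S1 := Finset.sum_nonneg fun i _ => hμ i
    have hS2nn : 0 ≤ S2 := Finset.sum_nonneg fun i _ => hμ i
    have htot : ∑ i, μ i = S2 + S1 := by
      rw [← hS2, hS1def]
      exact (Finset.sum_sdiff (Finset.subset_univ T)).symm
    have hkey : (k:ℝ) * S2 ≤ ((Z.card:ℝ) - k) * S1 := by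
      have hjT : ∀ j ∈ Z \ T, (k:ℝ) * μ j ≤ S1 := by
        intro j hj
        have : ∑ _i ∈ T, μ j ≤ ∑ i ∈ T, μ i :=
          Finset.sum_le_sum fun i hi => hTtop i hi j hj
        simpa [hTc] using this
      have h6 : ∑ j ∈ Z \ T, (k:ℝ) * μ j ≤ ∑ _j ∈ Z \ T, S1 :=
        Finset.sum_le_sum hjT
      rw [← Finset.mul_sum, Finset.sum_const, nsmul_eq_mul,
        Finset.card_sdiff_of_subset hTZ, hTc] at h6
      rw [Nat.cast_sub (le_of_lt hcase)] at h6
      exact h6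
    have hZN : (Z.card:ℝ) ≤ (N:ℝ) := by exact_mod_cast hZ
    rw [hS2, htot]
    nlinarith [hkey, hS1nn, hS2nn, hZN, hNk]

section Spectral

variable {p : ℕ} {A : Matrix (Fin p) (Fin p) ℝ}

/-- Conjugation of a diagonal matrix by the eigenvector unitary of `hA`. -/
noncomputable def conjD (hA : A.IsHermitian) (w : Fin p → ℝ) : Matrix (Fin p) (Fin p) ℝ :=
  (Matrix.IsHermitian.eigenvectorUnitary hA : Matrix (Fin p) (Fin p) ℝ) * Matrix.diagonal w *
    star (Matrix.IsHermitian.eigenvectorUnitary hA : Matrix (Fin p) (Fin p) ℝ)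

lemma sU_star_mul (hA : A.IsHermitian) :
    star (Matrix.IsHermitian.eigenvectorUnitary hA : Matrix (Fin p) (Fin p) ℝ) *
      (Matrix.IsHermitian.eigenvectorUnitary hA : Matrix (Fin p) (Fin p) ℝ) = 1 := by
  have := (Matrix.IsHermitian.eigenvectorUnitary hA).2
  rw [Matrix.mem_unitaryGroup_iff'] at this
  exact this

lemma sU_mul_star (hA : A.IsHermitian) :
    (Matrix.IsHermitian.eigenvectorUnitary hA : Matrix (Fin p) (Fin p) ℝ) *
      star (Matrix.IsHermitian.eigenvectorUnitary hA : Matrix (Fin p) (Fin p) ℝ) = 1 := by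
  have := (Matrix.IsHermitian.eigenvectorUnitary hA).2
  rw [Matrix.mem_unitaryGroup_iff] at this
  exact this

lemma conj_mul_conj (U D1 D2 : Matrix (Fin p) (Fin p) ℝ) (h : star U * U = 1) :
    (U * D1 * star U) * (U * D2 * star U) = U * (D1 * D2) * star U := by
  simp only [Matrix.mul_assoc]
  rw [← Matrix.mul_assoc (star U) U, h, Matrix.one_mul]

lemma conjD_mul (hA : A.IsHermitian) (w₁ w₂ : Fin p → ℝ) :
    conjD hA w₁ * conjD hA w₂ = conjD hA (fun i => w₁ i * w₂ i) := by
  unfold conjD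
  rw [conj_mul_conj _ _ _ (sU_star_mul hA), Matrix.diagonal_mul_diagonal]

lemma conjD_sub (hA : A.IsHermitian) (w₁ w₂ : Fin p → ℝ) :
    conjD hA w₁ - conjD hA w₂ = conjD hA (fun i => w₁ i - w₂ i) := by
  unfold conjD
  rw [← Matrix.sub_mul, ← Matrix.mul_sub, Matrix.diagonal_sub]

lemma conjD_one (hA : A.IsHermitian) : conjD hA (fun _ => 1) = 1 := by
  unfold conjD
  rw [Matrix.diagonal_one, Matrix.mul_one, sU_mul_star hA]

lemma trace_conjD (hA : A.IsHermitian) (w : Fin p → ℝ) :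
    Matrix.trace (conjD hA w) = ∑ i, w i := by
  unfold conjD
  rw [Matrix.trace_mul_comm, ← Matrix.mul_assoc, sU_star_mul hA, Matrix.one_mul,
    Matrix.trace_diagonal]

lemma conjD_herm (hA : A.IsHermitian) (w : Fin p → ℝ) : (conjD hA w)ᴴ = conjD hA w := by
  unfold conjD
  have hw : star w = w := funext fun i => star_trivial _
  simp only [Matrix.star_eq_conjTranspose, Matrix.conjTranspose_mul,
    Matrix.diagonal_conjTranspose, hw, Matrix.conjTranspose_conjTranspose, Matrix.mul_assoc]

lemma rank_conjD_le (hA : A.IsHermitian) (w : Fin p → ℝ) :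
    (conjD hA w).rank ≤ Fintype.card {i // w i ≠ 0} := by
  unfold conjD
  calc (_ * Matrix.diagonal w * _).rank ≤ (_ * Matrix.diagonal w).rank :=
        Matrix.rank_mul_le_left _ _
    _ ≤ (Matrix.diagonal w).rank := Matrix.rank_mul_le_right _ _
    _ = Fintype.card {i // w i ≠ 0} := Matrix.rank_diagonal w

lemma spectral' (hA : A.IsHermitian) : A = conjD hA hA.eigenvalues := by
  have h := hA.spectral_theorem
  have h2 : (Matrix.diagonal (RCLike.ofReal ∘ hA.eigenvalues) : Matrix (Fin p) (Fin p) ℝ)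
      = Matrix.diagonal hA.eigenvalues := by
    rw [RCLike.ofReal_real_eq_id, Function.id_comp]
  rw [h2] at h
  exact h

end Spectral

lemma fq_add_expand (A B : Matrix (Fin m) (Fin n) ℝ) :
    fq (A + B) = fq A + 2 * frobInner A B + fq B := by
  simp only [fq, frobInner, Matrix.add_apply, Finset.mul_sum, ← Finset.sum_add_distrib]
  apply Finset.sum_congr rfl; intro i _
  apply Finset.sum_congr rfl; intro j _
  ring

lemma core {r' k : ℕ} (X d : Matrix (Fin m) (Fin n) ℝ) (hrk : X.rank = r')
    (hm : r' + k ≤ m) :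
    ∃ V : Matrix (Fin m) (Fin n) ℝ,
      (∀ t : ℝ, (X + t • V).rank ≤ r' + k) ∧
      ((m:ℝ) - r') * fq (d - V) ≤ ((m:ℝ) - (r' + k)) * fq d := by
  classical
  have hr'm : r' ≤ m := le_trans (Nat.le_add_right _ _) hm
  set H := X * Xᴴ with hHdef
  have hHh : H.IsHermitian := Matrix.isHermitian_mul_conjTranspose_self X
  set ZP := Finset.univ.filter (fun i => hHh.eigenvalues i ≠ 0) with hZPdef
  set P := conjD hHh (fun i => if i ∈ ZP then (1:ℝ) else 0) with hPdef
  have hPH : P * H = H := by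
    conv_lhs => rw [spectral' hHh]
    rw [hPdef, conjD_mul]
    have h7 : (fun i => (if i ∈ ZP then (1:ℝ) else 0) * hHh.eigenvalues i) = hHh.eigenvalues := by
      funext i
      by_cases hi : i ∈ ZP
      · rw [if_pos hi, one_mul]
      · have : hHh.eigenvalues i = 0 := by
          by_contra hne
          exact hi (Finset.mem_filter.2 ⟨Finset.mem_univ i, hne⟩)
        rw [if_neg hi, zero_mul, this]
    rw [h7, ← spectral' hHh]
  have hPP : P * P = P := by
    rw [hPdef, conjD_mul]
    have h : (fun i => (if i ∈ ZP then (1:ℝ) else 0) * (if i ∈ ZP then (1:ℝ) else 0)) =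
        fun i => if i ∈ ZP then (1:ℝ) else 0 := by
      funext i; by_cases hi : i ∈ ZP <;> simp [hi]
    rw [h]
  have hPherm : Pᴴ = P := conjD_herm hHh _
  have h1P : (1 - P)ᴴ = 1 - P := by
    rw [Matrix.conjTranspose_sub, Matrix.conjTranspose_one, hPherm]
  have hPX : P * X = X := by
    have h0 : ((1 - P) * X) * ((1 - P) * X)ᴴ = 0 := by
      rw [Matrix.conjTranspose_mul, h1P]
      calc (1 - P) * X * (Xᴴ * (1 - P)) = (1 - P) * H * (1 - P) := by
            rw [hHdef]; simp only [Matrix.mul_assoc]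
        _ = 0 := by
            rw [Matrix.sub_mul, Matrix.one_mul, hPH, sub_self, Matrix.zero_mul]
    have h2 : (1 - P) * X = 0 := Matrix.self_mul_conjTranspose_eq_zero.mp h0
    have h3 : X - P * X = 0 := by rw [← h2, Matrix.sub_mul, Matrix.one_mul]
    have := sub_eq_zero.mp h3
    exact this.symm
  have hcardZP : ZP.card = r' := by
    have h1 : H.rank = Fintype.card {i // hHh.eigenvalues i ≠ 0} :=
      hHh.rank_eq_card_non_zero_eigs
    have h2 : H.rank = r' := by rw [hHdef, Matrix.rank_self_mul_conjTranspose, hrk]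
    calc ZP.card = Fintype.card {i // hHh.eigenvalues i ≠ 0} := (Fintype.card_subtype _).symm
      _ = H.rank := h1.symm
      _ = r' := h2
  have hrankP : P.rank ≤ r' := by
    refine le_trans (rank_conjD_le hHh _) ?_
    have h4 : Fintype.card {i // (if i ∈ ZP then (1:ℝ) else 0) ≠ 0} = ZP.card := by
      rw [Fintype.card_subtype]
      congr 1
      ext i
      by_cases hi : i ∈ ZP <;> simp [hi]
    rw [h4, hcardZP]
  set E := d - P * d with hEdef
  have hE1 : E = (1 - P) * d := by rw [Matrix.sub_mul, Matrix.one_mul]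
  have h1subP : (1:Matrix (Fin m) (Fin m) ℝ) - P =
      conjD hHh (fun i => 1 - (if i ∈ ZP then (1:ℝ) else 0)) := by
    rw [← conjD_one hHh, hPdef, conjD_sub]
  have hrankE : E.rank ≤ m - r' := by
    rw [hE1]
    refine le_trans (Matrix.rank_mul_le_left _ _) ?_
    rw [h1subP]
    refine le_trans (rank_conjD_le hHh _) ?_
    have h5 : Fintype.card {i // (1 - if i ∈ ZP then (1:ℝ) else 0) ≠ 0} = ZPᶜ.card := by
      rw [Fintype.card_subtype]
      congr 1
      ext i
      by_cases hi : i ∈ ZP <;> simp [hi]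
    rw [h5, Finset.card_compl, hcardZP, Fintype.card_fin]
  set M := Eᴴ * E with hMdef
  have hMh : M.IsHermitian := Matrix.isHermitian_conjTranspose_mul_self E
  set μ := hMh.eigenvalues with hμdef
  have hμnn : ∀ i, 0 ≤ μ i := fun i =>
    (Matrix.posSemidef_conjTranspose_mul_self E).eigenvalues_nonneg i
  have hZE : (Finset.univ.filter fun i => μ i ≠ 0).card ≤ m - r' := by
    have h1 : M.rank = Fintype.card {i // μ i ≠ 0} := hMh.rank_eq_card_non_zero_eigs
    have h2 : M.rank = E.rank := by rw [hMdef, Matrix.rank_conjTranspose_mul_self]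
    calc (Finset.univ.filter fun i => μ i ≠ 0).card
        = Fintype.card {i // μ i ≠ 0} := (Fintype.card_subtype _).symm
      _ = M.rank := h1.symm
      _ = E.rank := h2
      _ ≤ m - r' := hrankE
  have hkN : k ≤ m - r' := by omega
  obtain ⟨T, hTk, htail⟩ := tail_bound μ hμnn (m - r') k hZE hkN
  set R := conjD hMh (fun i => if i ∈ T then (1:ℝ) else 0) with hRdef
  have hRherm : Rᴴ = R := conjD_herm hMh _
  have hrankR : R.rank ≤ k := by
    refine le_trans (rank_conjD_le hMh _) (le_trans ?_ hTk)
    apply le_of_eq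
    rw [Fintype.card_subtype]
    congr 1
    ext i
    by_cases hi : i ∈ T <;> simp [hi]
  refine ⟨P * d + E * R, ?_, ?_⟩
  · intro t
    have hdecomp : X + t • (P * d + E * R) = P * (X + t • d) + (t • E) * R := by
      rw [Matrix.mul_add, hPX, Matrix.mul_smul, Matrix.smul_mul, smul_add, add_assoc]
    calc (X + t • (P * d + E * R)).rank
        = (P * (X + t • d) + (t • E) * R).rank := by rw [hdecomp]
      _ ≤ (P * (X + t • d)).rank + ((t • E) * R).rank := rank_add_le' _ _
      _ ≤ P.rank + R.rank :=
          add_le_add (Matrix.rank_mul_le_left _ _) (Matrix.rank_mul_le_right _ _)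
      _ ≤ r' + k := add_le_add hrankP hrankR
  · have hdV : d - (P * d + E * R) = E * (1 - R) := by
      rw [Matrix.mul_sub, Matrix.mul_one, sub_add_eq_sub_sub, ← hEdef]
    have h1subR : (1:Matrix (Fin n) (Fin n) ℝ) - R =
        conjD hMh (fun i => 1 - (if i ∈ T then (1:ℝ) else 0)) := by
      rw [← conjD_one hMh, hRdef, conjD_sub]
    have hfqdV : fq (d - (P * d + E * R)) = ∑ i ∈ Finset.univ \ T, μ i := by
      rw [hdV, fq_eq_trace]
      have hconjT : (E * (1 - R))ᴴ = (1 - R) * Eᴴ := by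
        rw [Matrix.conjTranspose_mul, Matrix.conjTranspose_sub, Matrix.conjTranspose_one, hRherm]
      rw [hconjT]
      have hassoc : (1 - R) * Eᴴ * (E * (1 - R)) = (1 - R) * (M * (1 - R)) := by
        rw [hMdef]; simp only [Matrix.mul_assoc]
      rw [hassoc, Matrix.trace_mul_comm]
      have h11 : (1 - R) * (1 - R) = 1 - R := by
        rw [h1subR, conjD_mul]
        have h : (fun i => (1 - if i ∈ T then (1:ℝ) else 0) * (1 - if i ∈ T then (1:ℝ) else 0)) =
            fun i => 1 - if i ∈ T then (1:ℝ) else 0 := by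
          funext i; by_cases hi : i ∈ T <;> simp [hi]
        rw [h]
      rw [Matrix.mul_assoc, h11]
      conv_lhs => rw [spectral' hMh, h1subR]
      rw [conjD_mul, trace_conjD]
      have h12 : ∀ i, μ i * (1 - if i ∈ T then (1:ℝ) else 0) =
          if i ∈ Finset.univ \ T then μ i else 0 := by
        intro i; by_cases hi : i ∈ T <;> simp [hi]
      refine (Finset.sum_congr rfl (fun i _ => h12 i)).trans ?_
      rw [Finset.sum_ite_mem, Finset.univ_inter]
    have hfqE : fq E = ∑ i, μ i := by
      rw [fq_eq_trace, ← hMdef]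
      conv_lhs => rw [spectral' hMh]
      rw [trace_conjD]
    have hEd : fq E ≤ fq d := by
      have hcross : frobInner (P * d) E = 0 := by
        have hP10 : P * (1 - P) = 0 := by
          rw [Matrix.mul_sub, Matrix.mul_one, hPP, sub_self]
        rw [frobInner_eq_trace, hE1]
        have h13 : (P * d)ᴴ * ((1 - P) * d) = dᴴ * (P * (1 - P)) * d := by
          rw [Matrix.conjTranspose_mul, hPherm]
          simp only [Matrix.mul_assoc]
        rw [h13, hP10, Matrix.mul_zero, Matrix.zero_mul, Matrix.trace_zero]
      have hd : P * d + E = d := by rw [hEdef]; abel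
      calc fq E ≤ fq (P * d) + 2 * frobInner (P * d) E + fq E := by
            rw [hcross]; have := fq_nonneg (P * d); linarith
        _ = fq (P * d + E) := (fq_add_expand _ _).symm
        _ = fq d := by rw [hd]
    have hc : ((m - r' : ℕ):ℝ) = (m:ℝ) - r' := by rw [Nat.cast_sub hr'm]
    have hrk' : ((r':ℝ) + k) ≤ (m:ℝ) := by exact_mod_cast hm
    have h8 : (0:ℝ) ≤ (m:ℝ) - r' - k := by linarith
    rw [hc] at htail
    have h10 : ((m:ℝ) - ↑r' - ↑k) * (∑ i, μ i) ≤ ((m:ℝ) - ↑r' - ↑k) * fq d := by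
      apply mul_le_mul_of_nonneg_left _ h8
      rw [← hfqE]; exact hEd
    rw [hfqdV]
    push_cast
    nlinarith [htail, h10]

lemma fq_neg (A : Matrix (Fin m) (Fin n) ℝ) : fq (-A) = fq A := by
  simp [fq]

lemma coreMin {r' k : ℕ} (X d : Matrix (Fin m) (Fin n) ℝ) (hrk : X.rank = r')
    (hm : r' + k ≤ min m n) :
    ∃ V : Matrix (Fin m) (Fin n) ℝ,
      (∀ t : ℝ, (X + t • V).rank ≤ r' + k) ∧
      (((min m n : ℕ):ℝ) - r') * fq (d - V) ≤ (((min m n : ℕ):ℝ) - (r' + k)) * fq d := by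
  rcases le_total m n with hmn | hmn
  · rw [min_eq_left hmn] at hm ⊢
    exact core X d hrk hm
  · rw [min_eq_right hmn] at hm ⊢
    obtain ⟨Vt, hVt1, hVt2⟩ := core Xᵀ dᵀ (by rw [Matrix.rank_transpose, hrk]) hm
    refine ⟨Vtᵀ, fun t => ?_, ?_⟩
    · have h1 : (X + t • Vtᵀ)ᵀ = Xᵀ + t • Vt := by
        rw [Matrix.transpose_add, Matrix.transpose_smul, Matrix.transpose_transpose]
      calc (X + t • Vtᵀ).rank = (X + t • Vtᵀ)ᵀ.rank := (Matrix.rank_transpose _).symm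
        _ = (Xᵀ + t • Vt).rank := by rw [h1]
        _ ≤ r' + k := hVt1 t
    · have h2 : fq (d - Vtᵀ) = fq (dᵀ - Vt) := by
        rw [← fq_transpose (d - Vtᵀ), Matrix.transpose_sub, Matrix.transpose_transpose]
      have h3 : fq d = fq dᵀ := (fq_transpose d).symm
      rw [h2, h3]
      exact hVt2

lemma final_arith {c rr rp F q' A1 A2 : ℝ} (e1 : A1 = F - q') (e2 : A1 ≤ A2)
    (e3 : (c - rp) * A2 ≤ (c - rr) * F) (e4 : 0 < c - rp) :
    (rr - rp) * F ≤ q' * (c - rp) := by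
  nlinarith [mul_le_mul_of_nonneg_right e2 (le_of_lt e4), e3]

end Stmt14Aux

open Stmt14Aux in
theorem stmt14 {m n r r' : ℕ} (h1 : 1 ≤ r') (h2 : r' ≤ r) (hr : r < min m n)
    (f : Matrix (Fin m) (Fin n) ℝ → ℝ) (X : Matrix (Fin m) (Fin n) ℝ)
    (hf : DifferentiableAt ℝ f X) (hrank : X.rank = r') (G : Matrix (Fin m) (Fin n) ℝ)
    (hG : G ∈ projSet (tanCone {A : Matrix (Fin m) (Fin n) ℝ | A.rank ≤ r} X)
      (-(gradMatrix f X))) :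
    ‖G‖ ≤ ‖gradMatrix f X‖ ∧
      Real.sqrt (((r : ℝ) - (r' : ℝ)) / ((min m n : ℝ) - (r' : ℝ))) * ‖gradMatrix f X‖ ≤ ‖G‖ := by
  classical
  set d := -(gradMatrix f X) with hd
  set S := {A : Matrix (Fin m) (Fin n) ℝ | A.rank ≤ r} with hSdef
  set C := tanCone S X with hCdef
  obtain ⟨hGC, hGdist⟩ := hG
  have hproj : ∀ V ∈ C, ‖d - G‖ ≤ ‖d - V‖ := by
    intro V hV
    have h3 : dist d G ≤ dist d V := hGdist ▸ Metric.infDist_le_dist_of_mem hV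
    rwa [dist_eq_norm, dist_eq_norm] at h3
  have hfqproj : ∀ V ∈ C, fq (d - G) ≤ fq (d - V) := by
    intro V hV
    have h3 := hproj V hV
    have h4 := sq_norm_eq_fq (d - G)
    have h5 := sq_norm_eq_fq (d - V)
    nlinarith [norm_nonneg (d - G), norm_nonneg (d - V)]
  set q := fq G with hqdef
  set p := frobInner d G with hpdef
  have hq_nn : 0 ≤ q := fq_nonneg G
  have hineq : ∀ t : ℝ, 0 < t → 2*(t-1)*p ≤ (t^2-1)*q := by
    intro t ht
    have h3 := hfqproj (t • G) (smul_mem_tanCone ht hGC)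
    rw [fq_sub_expand, fq_sub_expand, frobInner_smul, fq_smul] at h3
    rw [hqdef, hpdef]
    nlinarith [h3]
  have hpq : p = q := by
    by_contra hne
    rcases lt_or_gt_of_ne hne with hlt | hgt
    · set δ := q - p with hδ
      have hδpos : 0 < δ := by rw [hδ]; linarith
      set ε := min (1/2 : ℝ) (δ/(q+1)) with hε
      have hεpos : 0 < ε := lt_min (by norm_num) (div_pos hδpos (by linarith))
      have hεhalf : ε ≤ 1/2 := min_le_left _ _
      have hεle : ε * (q + 1) ≤ δ := by
        have h6 : ε ≤ δ/(q+1) := min_le_right _ _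
        rwa [le_div_iff₀ (by linarith : (0:ℝ) < q+1)] at h6
      have h7 := hineq (1 - ε) (by linarith)
      nlinarith [h7, hεpos, hεle, hq_nn, hlt]
    · set δ := p - q with hδ
      have hδpos : 0 < δ := by rw [hδ]; linarith
      set ε := min (1/2 : ℝ) (δ/(q+1)) with hε
      have hεpos : 0 < ε := lt_min (by norm_num) (div_pos hδpos (by linarith))
      have hεle : ε * (q + 1) ≤ δ := by
        have h6 : ε ≤ δ/(q+1) := min_le_right _ _
        rwa [le_div_iff₀ (by linarith : (0:ℝ) < q+1)] at h6
      have h7 := hineq (1 + ε) (by linarith)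
      nlinarith [h7, hεpos, hεle, hq_nn, hgt]
  have hnormgrad : ‖gradMatrix f X‖ = Real.sqrt (fq d) := by
    rw [hd, fq_neg, ← norm_eq_sqrt_fq]
  have hnormG : ‖G‖ = Real.sqrt q := norm_eq_sqrt_fq G
  have hfqd_nn : 0 ≤ fq d := fq_nonneg d
  constructor
  · -- first inequality
    rw [hnormG, hnormgrad]
    apply Real.sqrt_le_sqrt
    rcases eq_or_lt_of_le hq_nn with hq0 | hqpos
    · linarith
    · have hCS := frobInner_le d G
      rw [← hpdef, ← hqdef, hpq] at hCS
      have h8 : q * q ≤ fq d * q := by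
        nlinarith [hCS, Real.sq_sqrt hfqd_nn, Real.sq_sqrt hq_nn,
          Real.sqrt_nonneg (fq d), Real.sqrt_nonneg q]
      nlinarith [h8, hqpos]
  · -- second inequality
    have hmlt : r' + (r - r') ≤ min m n := by omega
    obtain ⟨V, hV1, hV2⟩ := coreMin X d hrank hmlt
    have hVC : V ∈ C := by
      apply mem_tanCone_of_forall
      intro t ht
      show (X + t • V).rank ≤ r
      calc (X + t • V).rank ≤ r' + (r - r') := hV1 t
        _ = r := by omega
    have hb := hfqproj V hVC
    have hfqdG : fq (d - G) = fq d - q := by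
      rw [fq_sub_expand, ← hpdef, ← hqdef, hpq]; ring
    have hNpos : (0:ℝ) < (min m n : ℝ) - r' := by
      have h10 : (r':ℝ) < (min m n : ℝ) := by exact_mod_cast lt_of_le_of_lt h2 hr
      linarith
    have hcast : ((r - r' : ℕ) : ℝ) = (r:ℝ) - r' := by rw [Nat.cast_sub h2]
    rw [hcast, Nat.cast_min] at hV2
    have heq : ((min (m:ℝ) n) - ((r':ℝ) + ((r:ℝ) - r'))) = (min (m:ℝ) n) - r := by ring
    rw [heq] at hV2
    have hratio_nn : (0:ℝ) ≤ ((r:ℝ) - r') / ((min m n : ℝ) - r') := by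
      apply div_nonneg _ (le_of_lt hNpos)
      have : (r':ℝ) ≤ (r:ℝ) := by exact_mod_cast h2
      linarith
    rw [hnormG, hnormgrad, ← Real.sqrt_mul hratio_nn]
    apply Real.sqrt_le_sqrt
    rw [div_mul_eq_mul_div, div_le_iff₀ hNpos]
    exact final_arith hfqdG hb hV2 hNpos
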